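/- Let L_n = ∂_xⁿ + Σ_{i≤n−2} u_i ∂_x^i be a monic ordinary differential operator and ψ(x,k) = e^{kx}(1 + Σ_{s≥1} ξ_s(x)k^{−s}) the formal wave solution of L_n ψ = kⁿ ψ normalized by ξ_s(0) = 0. If L_m is any differential operator commuting with L_n, then there exists a formal Laurent series a(k) = k^m + Σ_{s ≥ −m+1} a_s k^{−s} with constant coefficients such that L_m ψ = a(k) ψ. -/

import Mathlib

/-!
STATEMENT 16: Let L_n = ∂ⁿ + Σ_{i≤n−2} u_i ∂^i be monic and ψ = e^{kx}(1 + Σ ξ_s k^{−s})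
the formal wave solution of L_n ψ = kⁿψ normalized by ξ_s(0) = 0.  If L_m is any
differential operator commuting with L_n (of order m, with leading coefficient 1),
then there is a formal Laurent series a(k) = k^m + Σ_{s≥−m+1} a_s k^{−s} with constant
coefficients such that L_m ψ = a(k)ψ.

Pseudodifferential operators `(N, c)` represent `Σ c s ∂^{N-s}` with formal power
series coefficients.  Writing ψ = Φe^{kx} with Φ = Σ ξ_s ∂^{−s}, the equation
L_nψ = kⁿψ reads L_n∘Φ = Φ∘∂ⁿ and the conclusion L_mψ = a(k)ψ reads
L_m∘Φ = Φ∘a(∂) for a constant-coefficient pseudodifferential operator a(∂).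
-/

noncomputable section

def PsDO : Type := ℤ × (ℕ → PowerSeries ℂ)

namespace PsDO

def gbin (n : ℤ) (j : ℕ) : ℂ :=
  (∏ i ∈ Finset.range j, ((n : ℂ) - (i : ℂ))) / (j.factorial : ℂ)

def coeffAt (A : PsDO) (n : ℤ) : PowerSeries ℂ :=
  if n ≤ A.1 then A.2 (A.1 - n).toNat else 0

def mul (A B : PsDO) : PsDO :=
  (A.1 + B.1, fun t => ∑ s ∈ Finset.range (t + 1), ∑ j ∈ Finset.range (t + 1 - s),
    A.2 s * PowerSeries.C (gbin (A.1 - s) j) *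
      (PowerSeries.derivativeFun)^[j] (B.2 (t - s - j)))

def one : PsDO := (0, fun s => if s = 0 then 1 else 0)

def Dx : PsDO := (1, fun s => if s = 0 then 1 else 0)

def pow (A : PsDO) (n : ℕ) : PsDO := (mul A)^[n] one

end PsDO

open PsDO

/-
Since `ξ_0 = 1`, left composition with `Φ` is unitriangular on coefficient sequences, hence
bijective, so `B := Φ⁻¹ L_m Φ` exists. Then
`Φ (∂ⁿ B) = L_n Φ B = L_n L_m Φ = L_m L_n Φ = L_m Φ ∂ⁿ = Φ (B ∂ⁿ)`, so `B` commutes with `∂ⁿ`.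
Comparing coefficients, the `(t+1)`-st coefficient of `∂ⁿ B - B ∂ⁿ` is `n B_t'` plus derivatives of
earlier coefficients, so inductively every coefficient of `B` is constant. Associativity of the
composition, used at every step, comes from the Vandermonde identity for generalized binomial
coefficients together with the Leibniz rule.
-/

open Finset PowerSeries

namespace Finset.Nat

variable {M : Type*} [AddCommMonoid M]

theorem sum_antidiagonal_antidiagonal_assoc (t : ℕ) (F : ℕ → ℕ → ℕ → M) :
    ∑ x ∈ antidiagonal t, ∑ y ∈ antidiagonal x.1, F y.1 y.2 x.2 =
      ∑ x ∈ antidiagonal t, ∑ y ∈ antidiagonal x.2, F x.1 y.1 y.2 := by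
  simp only [sum_sigma']
  refine sum_nbij' (fun p => ⟨(p.2.1, p.2.2 + p.1.2), (p.2.2, p.1.2)⟩)
    (fun p => ⟨(p.1.1 + p.2.1, p.2.2), (p.1.1, p.2.1)⟩) ?_ ?_ ?_ ?_ ?_ <;>
    rintro ⟨⟨a, b⟩, ⟨c, d⟩⟩ hp <;>
    simp only [mem_sigma, HasAntidiagonal.mem_antidiagonal, Sigma.mk.inj_iff, Prod.mk.injEq,
      heq_eq_eq, and_true, true_and] at hp ⊢ <;> omega

theorem sum_antidiagonal_antidiagonal_left_comm (t : ℕ) (F : ℕ → ℕ → ℕ → M) :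
    ∑ x ∈ antidiagonal t, ∑ y ∈ antidiagonal x.2, F x.1 y.1 y.2 =
      ∑ x ∈ antidiagonal t, ∑ y ∈ antidiagonal x.2, F y.1 x.1 y.2 := by
  simp only [sum_sigma']
  refine sum_nbij' (fun p => ⟨(p.2.1, p.1.1 + p.2.2), (p.1.1, p.2.2)⟩)
    (fun p => ⟨(p.2.1, p.1.1 + p.2.2), (p.1.1, p.2.2)⟩) ?_ ?_ ?_ ?_ ?_ <;>
    rintro ⟨⟨a, b⟩, ⟨c, d⟩⟩ hp <;>
    simp only [mem_sigma, HasAntidiagonal.mem_antidiagonal, Sigma.mk.inj_iff, Prod.mk.injEq,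
      heq_eq_eq, and_true, true_and] at hp ⊢ <;> omega

end Finset.Nat

namespace Derivation

variable {R A : Type*} [CommSemiring R] [CommSemiring A] [Algebra R A]

theorem coe_pow_toLinearMap (δ : Derivation R A A) (n : ℕ) :
    ⇑((δ : A →ₗ[R] A) ^ n) = δ^[n] := by
  rw [Module.End.coe_pow]; rfl

theorem iterate_map_sum (δ : Derivation R A A) {ι : Type*} (s : Finset ι) (f : ι → A) (n : ℕ) :
    δ^[n] (∑ i ∈ s, f i) = ∑ i ∈ s, δ^[n] (f i) := by
  rw [← δ.coe_pow_toLinearMap, map_sum]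

theorem iterate_map_smul (δ : Derivation R A A) (c : R) (a : A) (n : ℕ) :
    δ^[n] (c • a) = c • δ^[n] a := by
  rw [← δ.coe_pow_toLinearMap, _root_.map_smul]

theorem iterate_leibniz (δ : Derivation R A A) (n : ℕ) (a b : A) :
    δ^[n] (a * b) = ∑ ij ∈ antidiagonal n, n.choose ij.1 • (δ^[ij.1] a * δ^[ij.2] b) := by
  induction n with
  | zero => simp
  | succ n ih =>
    rw [sum_antidiagonal_choose_succ_nsmul (fun i j => δ^[i] a * δ^[j] b) n,
      Function.iterate_succ_apply', ih, map_sum, ← sum_add_distrib]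
    refine sum_congr rfl fun ⟨i, j⟩ hij => ?_
    rw [n.choose_symm_of_eq_add (HasAntidiagonal.mem_antidiagonal.1 hij).symm, map_nsmul,
      leibniz, Function.iterate_succ_apply', Function.iterate_succ_apply', smul_eq_mul,
      smul_eq_mul, ← smul_add, mul_comm (δ^[j] b)]

end Derivation

def IsUnitriangular {M : Type*} [AddCommGroup M] (T : (ℕ → M) → ℕ → M) : Prop :=
  ∀ Z Z' t, (∀ r < t, Z r = Z' r) → T Z t - Z t = T Z' t - Z' t

namespace IsUnitriangular

variable {M : Type*} [AddCommGroup M] {T : (ℕ → M) → ℕ → M}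

theorem injective (hT : IsUnitriangular T) : Function.Injective T := by
  intro Z Z' h
  funext t
  induction t using Nat.strong_induction_on with
  | _ t ih =>
    have hsub := hT Z Z' t ih
    rw [h] at hsub
    exact sub_right_injective hsub

theorem surjective (hT : IsUnitriangular T) : Function.Surjective T := by
  intro F
  set Z : ℕ → M := Nat.strongRec fun t Zlt =>
    F t - T (fun r => if h : r < t then Zlt r h else 0) t
  refine ⟨Z, funext fun t => ?_⟩
  have hZ : Z t = F t - T (fun r => if r < t then Z r else 0) t := Nat.strongRec_eq _ t
  have hloc := hT Z (fun r => if r < t then Z r else 0) t fun r hr => by simp [hr]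
  rw [if_neg (lt_irrefl t), sub_zero] at hloc
  rw [← sub_add_cancel (T Z t) (Z t), hloc, hZ, add_sub_cancel]

end IsUnitriangular

theorem PowerSeries.eq_C_of_derivative_eq_zero {R : Type*} [CommRing R] [IsAddTorsionFree R]
    {f : R⟦X⟧} (hf : d⁄dX R f = 0) : f = C (constantCoeff f) :=
  derivative.ext (by rw [hf, derivative_C]) (by simp)

namespace PsDO

theorem gbin_eq_choose (n : ℤ) (j : ℕ) : gbin n j = Ring.choose (n : ℂ) j := by
  have hprod : (descPochhammer ℤ j).smeval (n : ℂ) = ∏ i ∈ range j, ((n : ℂ) - i) := by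
    induction j with
    | zero => simp
    | succ k ih =>
      rw [descPochhammer_succ_right, Polynomial.smeval_mul, ih, prod_range_succ]
      simp [Polynomial.smeval_sub, Polynomial.smeval_X, Polynomial.smeval_natCast]
  have hfac := Ring.descPochhammer_eq_factorial_smul_choose (n : ℂ) j
  rw [hprod, nsmul_eq_mul] at hfac
  rw [gbin, hfac, mul_div_cancel_left₀ _ (Nat.cast_ne_zero.2 j.factorial_ne_zero)]

@[simp]
theorem gbin_zero_right (n : ℤ) : gbin n 0 = 1 := by simp [gbin]

theorem gbin_zero_left {j : ℕ} (hj : j ≠ 0) : gbin 0 j = 0 := by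
  simp [gbin_eq_choose, Ring.choose_zero_pos ℂ (Nat.pos_of_ne_zero hj)]

theorem gbin_one (n : ℤ) : gbin n 1 = n := by simp [gbin]

theorem choose_mul_gbin (c : ℤ) (i j : ℕ) :
    ((i + j).choose i : ℂ) * gbin c (i + j) = gbin c i * gbin (c - i) j := by
  have h := Ring.choose_smul_choose (c : ℂ) (Nat.le_add_right i j)
  rw [nsmul_eq_mul, Nat.add_sub_cancel_left] at h
  simp only [gbin_eq_choose, h]
  push_cast; rfl

theorem sum_antidiagonal_gbin_mul_gbin (c c' : ℤ) (n : ℕ) :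
    ∑ ij ∈ antidiagonal n, gbin c ij.1 * gbin c' ij.2 = gbin (c + c') n := by
  simp only [gbin_eq_choose]
  push_cast
  exact (Ring.add_choose_eq n (Commute.all _ _)).symm

variable {A : Type*} [CommRing A] [Algebra ℂ A] (δ : Derivation ℂ A A)

/-- With `∂` acting on coefficients by `δ`, `dpowCoeffs δ c g` lists the coefficients of
`∂^c ∘ Σ_u g u ∂^(-u) = Σ_j Σ_u gbin c j (δ^j g u) ∂^(c-j-u)`. -/
def dpowCoeffs (c : ℤ) (g : ℕ → A) : ℕ → A := fun u =>
  ∑ y ∈ antidiagonal u, gbin c y.1 • δ^[y.1] (g y.2)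

/-- The coefficients of `(Σ_s f s ∂^(d-s)) ∘ (Σ_u g u ∂^(e-u))`; they do not depend on `e`. -/
def mulCoeffs (d : ℤ) (f g : ℕ → A) : ℕ → A := fun t =>
  ∑ x ∈ antidiagonal t, f x.1 * dpowCoeffs δ (d - x.1) g x.2

theorem dpowCoeffs_zero_left (g : ℕ → A) : dpowCoeffs δ 0 g = g := by
  funext u
  rw [dpowCoeffs, sum_eq_single (0, u)]
  · simp
  · rintro ⟨j, r⟩ hjr hne
    have hj : j ≠ 0 := by
      rintro rfl
      exact hne (by simpa [eq_comm] using hjr)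
    rw [gbin_zero_left hj, zero_smul]
  · simp

theorem dpowCoeffs_dpowCoeffs (c c' : ℤ) (g : ℕ → A) :
    dpowCoeffs δ c (dpowCoeffs δ c' g) = dpowCoeffs δ (c + c') g := by
  funext u
  calc dpowCoeffs δ c (dpowCoeffs δ c' g) u
      = ∑ x ∈ antidiagonal u, ∑ y ∈ antidiagonal x.2,
          (gbin c x.1 * gbin c' y.1) • δ^[x.1 + y.1] (g y.2) := by
        simp only [dpowCoeffs, Derivation.iterate_map_sum, Derivation.iterate_map_smul, smul_sum,
          smul_smul, Function.iterate_add_apply]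
    _ = ∑ x ∈ antidiagonal u, ∑ y ∈ antidiagonal x.1,
          (gbin c y.1 * gbin c' y.2) • δ^[y.1 + y.2] (g x.2) :=
        (Nat.sum_antidiagonal_antidiagonal_assoc u fun j j' r =>
          (gbin c j * gbin c' j') • δ^[j + j'] (g r)).symm
    _ = dpowCoeffs δ (c + c') g u := by
        refine sum_congr rfl fun x _ => ?_
        rw [← sum_antidiagonal_gbin_mul_gbin, sum_smul]
        refine sum_congr rfl fun y hy => ?_
        rw [HasAntidiagonal.mem_antidiagonal.1 hy]

theorem dpowCoeffs_mul_left (c : ℤ) (a : A) (g : ℕ → A) (u : ℕ) :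
    dpowCoeffs δ c (fun r => a * g r) u =
      ∑ x ∈ antidiagonal u, (gbin c x.1 • δ^[x.1] a) * dpowCoeffs δ (c - x.1) g x.2 := by
  calc dpowCoeffs δ c (fun r => a * g r) u
      = ∑ x ∈ antidiagonal u, ∑ y ∈ antidiagonal x.1,
          (gbin c y.1 * gbin (c - y.1) y.2) • (δ^[y.1] a * δ^[y.2] (g x.2)) := by
        refine sum_congr rfl fun x _ => ?_
        rw [δ.iterate_leibniz, smul_sum]
        refine sum_congr rfl fun y hy => ?_
        rw [← HasAntidiagonal.mem_antidiagonal.1 hy, ← choose_mul_gbin,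
          ← Nat.cast_smul_eq_nsmul ℂ, smul_smul, mul_comm (gbin _ _)]
    _ = ∑ x ∈ antidiagonal u, ∑ y ∈ antidiagonal x.2,
          (gbin c x.1 * gbin (c - x.1) y.1) • (δ^[x.1] a * δ^[y.1] (g y.2)) :=
        Nat.sum_antidiagonal_antidiagonal_assoc u fun i j r =>
          (gbin c i * gbin (c - i) j) • (δ^[i] a * δ^[j] (g r))
    _ = _ := by
        simp only [dpowCoeffs, mul_sum, smul_mul_smul_comm]

theorem dpowCoeffs_sum_antidiagonal (c : ℤ) (P : ℕ → ℕ → A) (w : ℕ) :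
    dpowCoeffs δ c (fun y => ∑ z ∈ antidiagonal y, P z.1 z.2) w =
      ∑ z ∈ antidiagonal w, dpowCoeffs δ c (P z.1) z.2 := by
  simp only [dpowCoeffs, Derivation.iterate_map_sum, smul_sum]
  exact Nat.sum_antidiagonal_antidiagonal_left_comm w fun j s r => gbin c j • δ^[j] (P s r)

theorem dpowCoeffs_mulCoeffs (c b : ℤ) (g h : ℕ → A) :
    dpowCoeffs δ c (mulCoeffs δ b g h) = mulCoeffs δ (c + b) (dpowCoeffs δ c g) h := by
  funext w
  calc dpowCoeffs δ c (mulCoeffs δ b g h) w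
      = ∑ x ∈ antidiagonal w, ∑ y ∈ antidiagonal x.2,
          (gbin c y.1 • δ^[y.1] (g x.1)) * dpowCoeffs δ (c + b - (y.1 + x.1 : ℕ)) h y.2 := by
        unfold mulCoeffs
        rw [dpowCoeffs_sum_antidiagonal δ c fun s r => g s * dpowCoeffs δ (b - s) h r]
        refine sum_congr rfl fun x _ => ?_
        rw [dpowCoeffs_mul_left]
        refine sum_congr rfl fun y _ => ?_
        rw [dpowCoeffs_dpowCoeffs, Nat.cast_add, sub_add_sub_comm, add_comm (y.1 : ℤ)]
    _ = ∑ x ∈ antidiagonal w, ∑ y ∈ antidiagonal x.1,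
          (gbin c y.1 • δ^[y.1] (g y.2)) * dpowCoeffs δ (c + b - (y.1 + y.2 : ℕ)) h x.2 := by
        exact (Nat.sum_antidiagonal_antidiagonal_left_comm w fun s i r =>
          (gbin c i • δ^[i] (g s)) * dpowCoeffs δ (c + b - (i + s : ℕ)) h r).trans
          (Nat.sum_antidiagonal_antidiagonal_assoc w fun i s r =>
            (gbin c i • δ^[i] (g s)) * dpowCoeffs δ (c + b - (i + s : ℕ)) h r).symm
    _ = mulCoeffs δ (c + b) (dpowCoeffs δ c g) h w := by
        refine sum_congr rfl fun x _ => ?_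
        rw [dpowCoeffs, sum_mul]
        refine sum_congr rfl fun y hy => ?_
        rw [HasAntidiagonal.mem_antidiagonal.1 hy]

theorem mulCoeffs_assoc (a b : ℤ) (f g h : ℕ → A) :
    mulCoeffs δ (a + b) (mulCoeffs δ a f g) h = mulCoeffs δ a f (mulCoeffs δ b g h) := by
  funext t
  calc mulCoeffs δ (a + b) (mulCoeffs δ a f g) h t
      = ∑ x ∈ antidiagonal t, ∑ y ∈ antidiagonal x.1,
          f y.1 * (dpowCoeffs δ (a - y.1) g y.2 *
            dpowCoeffs δ (a - y.1 + b - y.2) h x.2) := by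
        refine sum_congr rfl fun x _ => ?_
        rw [mulCoeffs, sum_mul]
        refine sum_congr rfl fun y hy => ?_
        rw [← HasAntidiagonal.mem_antidiagonal.1 hy, mul_assoc]
        congr 3
        push_cast; ring
    _ = ∑ x ∈ antidiagonal t, ∑ y ∈ antidiagonal x.2,
          f x.1 * (dpowCoeffs δ (a - x.1) g y.1 *
            dpowCoeffs δ (a - x.1 + b - y.1) h y.2) :=
        Nat.sum_antidiagonal_antidiagonal_assoc t fun s v u =>
          f s * (dpowCoeffs δ (a - s) g v * dpowCoeffs δ (a - s + b - v) h u)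
    _ = mulCoeffs δ a f (mulCoeffs δ b g h) t := by
        simp only [mulCoeffs, dpowCoeffs_mulCoeffs, mul_sum]

theorem dpowCoeffs_congr (c : ℤ) {g g' : ℕ → A} {u : ℕ} (h : ∀ r ≤ u, g r = g' r) :
    dpowCoeffs δ c g u = dpowCoeffs δ c g' u :=
  sum_congr rfl fun y hy => by
    rw [h y.2 (by rw [← HasAntidiagonal.mem_antidiagonal.1 hy]; omega)]

theorem isUnitriangular_mulCoeffs {ξ : ℕ → A} (hξ : ξ 0 = 1) :
    IsUnitriangular (mulCoeffs δ 0 ξ) := by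
  have hsplit : ∀ Z t, mulCoeffs δ 0 ξ Z t - Z t =
      ∑ s ∈ range t, ξ (s + 1) * dpowCoeffs δ (0 - (s + 1 : ℕ)) Z (t - (s + 1)) := by
    intro Z t
    rw [mulCoeffs, Nat.sum_antidiagonal_eq_sum_range_succ_mk, sum_range_succ']
    simp [hξ, dpowCoeffs_zero_left]
  intro Z Z' t hZ
  rw [hsplit, hsplit]
  refine sum_congr rfl fun s hs => ?_
  rw [dpowCoeffs_congr δ _ fun r hr => hZ r (by rw [mem_range] at hs; omega)]

theorem dpowCoeffs_single (c : ℤ) : dpowCoeffs δ c (Pi.single 0 1) = Pi.single 0 1 := by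
  funext u
  rw [dpowCoeffs, sum_eq_single (u, 0)]
  · cases u <;> simp [Function.iterate_succ_apply]
  · rintro ⟨j, r⟩ hjr hne
    have hr : r ≠ 0 := by
      rintro rfl
      exact hne (by simpa using hjr)
    simp [hr]
  · simp

theorem mulCoeffs_single_right (d : ℤ) (f : ℕ → A) : mulCoeffs δ d f (Pi.single 0 1) = f := by
  funext t
  simp only [mulCoeffs, dpowCoeffs_single]
  rw [sum_eq_single (t, 0)]
  · simp
  · rintro ⟨s, r⟩ hsr hne
    have hr : r ≠ 0 := by
      rintro rfl
      exact hne (by simpa using hsr)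
    simp [hr]
  · simp

theorem mulCoeffs_single_left (d : ℤ) (g : ℕ → A) :
    mulCoeffs δ d (Pi.single 0 1) g = dpowCoeffs δ d g := by
  funext t
  rw [mulCoeffs, sum_eq_single (0, t)]
  · simp
  · rintro ⟨s, r⟩ hsr hne
    have hs : s ≠ 0 := by
      rintro rfl
      exact hne (by simpa [eq_comm] using hsr)
    simp [hs]
  · simp

theorem mulCoeffs_apply_zero (d : ℤ) (f g : ℕ → A) : mulCoeffs δ d f g 0 = f 0 * g 0 := by
  simp [mulCoeffs, dpowCoeffs]

theorem derivation_eq_zero_of_dpowCoeffs_eq_self {n : ℤ} (hn : n ≠ 0) {B : ℕ → A}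
    (hB : dpowCoeffs δ n B = B) (t : ℕ) : δ (B t) = 0 := by
  induction t using Nat.strong_induction_on with
  | _ t ih =>
    -- coefficient `t + 1` of `∂ⁿ B = B` is `n • δ (B t) = 0` up to the (vanishing) derivatives
    -- of earlier coefficients
    have h := congrFun hB (t + 1)
    rw [dpowCoeffs, Nat.sum_antidiagonal_succ, sum_eq_single (0, t)] at h
    · simpa [hn, gbin_one] using h
    · rintro ⟨j, r⟩ hjr hne
      have hr : r < t := by
        rw [HasAntidiagonal.mem_antidiagonal] at hjr
        by_contra hrt
        exact hne (Prod.ext (by omega) (by omega))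
      rw [Function.iterate_succ_apply, ih r hr, iterate_map_zero, smul_zero]
    · simp

theorem exists_derivation_eq_zero_of_commute {n m : ℤ} (hn : n ≠ 0) {ξ L M : ℕ → A}
    (hξ : ξ 0 = 1) (hwave : mulCoeffs δ n L ξ = ξ)
    (hcomm : mulCoeffs δ n L M = mulCoeffs δ m M L) :
    ∃ B : ℕ → A, (∀ t, δ (B t) = 0) ∧ mulCoeffs δ 0 ξ B = mulCoeffs δ m M ξ := by
  have hΦ := isUnitriangular_mulCoeffs δ hξ
  obtain ⟨B, hB⟩ := hΦ.surjective (mulCoeffs δ m M ξ)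
  refine ⟨B, derivation_eq_zero_of_dpowCoeffs_eq_self δ hn (hΦ.injective ?_), hB⟩
  calc mulCoeffs δ 0 ξ (dpowCoeffs δ n B)
      = mulCoeffs δ (0 + n) (mulCoeffs δ 0 ξ (Pi.single 0 1)) B := by
        rw [mulCoeffs_assoc, mulCoeffs_single_left]
    _ = mulCoeffs δ (n + 0) (mulCoeffs δ n L ξ) B := by
        rw [mulCoeffs_single_right, hwave, zero_add, add_zero]
    _ = mulCoeffs δ (n + m) (mulCoeffs δ n L M) ξ := by
        rw [mulCoeffs_assoc, hB, mulCoeffs_assoc]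
    _ = mulCoeffs δ m M (mulCoeffs δ n L ξ) := by
        rw [hcomm, add_comm, mulCoeffs_assoc]
    _ = mulCoeffs δ 0 ξ B := by
        rw [hwave, hB]

theorem mul_snd (P Q : PsDO) : (mul P Q).2 = mulCoeffs (d⁄dX ℂ) P.1 P.2 Q.2 := by
  funext t
  simp only [mul, mulCoeffs, dpowCoeffs, Nat.sum_antidiagonal_eq_sum_range_succ_mk, mul_sum]
  refine sum_congr rfl fun s hs => ?_
  rw [mem_range] at hs
  rw [show t + 1 - s = t - s + 1 by omega]
  refine sum_congr rfl fun j _ => ?_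
  rw [smul_eq_C_mul, ← mul_assoc, Nat.sub_sub]
  -- the deprecated `derivativeFun` in `mul` unfolds to `⇑(d⁄dX ℂ)`
  rfl

theorem mul_eq_mul_iff {P Q R S : PsDO} : mul P Q = mul R S ↔
    P.1 + Q.1 = R.1 + S.1 ∧ mulCoeffs (d⁄dX ℂ) P.1 P.2 Q.2 = mulCoeffs (d⁄dX ℂ) R.1 R.2 S.2 := by
  rw [← mul_snd, ← mul_snd]
  exact Prod.ext_iff

theorem eq_of_coeffAt_eq {P Q : PsDO} (h1 : P.1 = Q.1) (h : ∀ q, coeffAt P q = coeffAt Q q) :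
    P = Q := by
  refine Prod.ext h1 (funext fun t => ?_)
  have hq := h (P.1 - t)
  rw [coeffAt, coeffAt, if_pos (by omega), ← h1, if_pos (by omega)] at hq
  rwa [show (P.1 - (P.1 - (t : ℤ))).toNat = t by omega] at hq

theorem ite_eq_zero_one_eq_single :
    (fun s : ℕ => if s = 0 then (1 : ℂ⟦X⟧) else 0) = Pi.single 0 1 := by
  funext s
  rw [Pi.single_apply]

theorem pow_Dx (n : ℕ) : pow Dx n = ((n : ℤ), Pi.single 0 1) := by
  induction n with
  | zero => exact Prod.ext rfl ite_eq_zero_one_eq_single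
  | succ k ih =>
    rw [pow, Function.iterate_succ_apply', ← pow, ih]
    refine Prod.ext (by simp [mul, Dx, add_comm]) ((mul_snd _ _).trans ?_)
    change mulCoeffs _ 1 (fun s => if s = 0 then 1 else 0) (Pi.single 0 1) = _
    rw [ite_eq_zero_one_eq_single, mulCoeffs_single_left, dpowCoeffs_single]

end PsDO

theorem stmt16_general (n m : ℕ) (hn : 1 ≤ n)
    (Ln : PsDO) (hord : Ln.1 = (n : ℤ))
    (ξ : ℕ → PowerSeries ℂ) (hξ0 : ξ 0 = 1)
    (hwave : ∀ q : ℤ,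
      coeffAt (mul Ln ((0 : ℤ), ξ)) q = coeffAt (mul ((0 : ℤ), ξ) (pow Dx n)) q)
    (Lm : PsDO) (hmord : Lm.1 = (m : ℤ)) (hmmonic : Lm.2 0 = 1)
    (hcomm : ∀ q : ℤ, coeffAt (mul Ln Lm) q = coeffAt (mul Lm Ln) q) :
    ∃ a : ℕ → ℂ, a 0 = 1 ∧
      ∀ q : ℤ, coeffAt (mul Lm ((0 : ℤ), ξ)) q =
        coeffAt (mul ((0 : ℤ), ξ) ((m : ℤ), fun s => PowerSeries.C (a s))) q := by
  have hwave' : mulCoeffs (d⁄dX ℂ) n Ln.2 ξ = ξ := by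
    have h := (mul_eq_mul_iff.1 (eq_of_coeffAt_eq (by simp [mul, pow_Dx, hord]) hwave)).2
    rwa [pow_Dx, mulCoeffs_single_right, hord] at h
  have hcomm' : mulCoeffs (d⁄dX ℂ) n Ln.2 Lm.2 = mulCoeffs (d⁄dX ℂ) m Lm.2 Ln.2 := by
    have h := (mul_eq_mul_iff.1 (eq_of_coeffAt_eq (add_comm _ _) hcomm)).2
    rwa [hord, hmord] at h
  obtain ⟨B, hBconst, hB⟩ :=
    exists_derivation_eq_zero_of_commute (d⁄dX ℂ) (by omega) hξ0 hwave' hcomm'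
  have hBC : (fun s => C (constantCoeff (B s))) = B :=
    funext fun s => (eq_C_of_derivative_eq_zero (hBconst s)).symm
  refine ⟨fun s => constantCoeff (B s), ?_, fun q => congrArg (coeffAt · q) ?_⟩
  · have h0 := congrFun hB 0
    rw [mulCoeffs_apply_zero, mulCoeffs_apply_zero, hξ0, hmmonic, one_mul, mul_one] at h0
    simp [h0]
  · refine mul_eq_mul_iff.2 ⟨by simp [hmord], ?_⟩
    simp only [hmord, hBC, hB]

theorem stmt16 (n m : ℕ) (hn : 1 ≤ n)
    (Ln : PsDO) (hord : Ln.1 = (n : ℤ)) (hmonic : Ln.2 0 = 1) (hsub : Ln.2 1 = 0)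
    (hdiff : ∀ s : ℕ, Ln.1 < (s : ℤ) → Ln.2 s = 0)
    (ξ : ℕ → PowerSeries ℂ) (hξ0 : ξ 0 = 1)
    (hnorm : ∀ s : ℕ, 1 ≤ s → PowerSeries.constantCoeff (ξ s) = 0)
    (hwave : ∀ q : ℤ,
      coeffAt (mul Ln ((0 : ℤ), ξ)) q = coeffAt (mul ((0 : ℤ), ξ) (pow Dx n)) q)
    (Lm : PsDO) (hmord : Lm.1 = (m : ℤ)) (hmmonic : Lm.2 0 = 1)
    (hmdiff : ∀ s : ℕ, Lm.1 < (s : ℤ) → Lm.2 s = 0)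
    (hcomm : ∀ q : ℤ, coeffAt (mul Ln Lm) q = coeffAt (mul Lm Ln) q) :
    ∃ a : ℕ → ℂ, a 0 = 1 ∧
      ∀ q : ℤ, coeffAt (mul Lm ((0 : ℤ), ξ)) q =
        coeffAt (mul ((0 : ℤ), ξ) ((m : ℤ), fun s => PowerSeries.C (a s))) q :=
  stmt16_general n m hn Ln hord ξ hξ0 hwave Lm hmord hmmonic hcomm
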